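/- arXiv:2412.06722 — 2 statements merged into one kernel-verified Lean document; each statement's English description precedes it below -/
import Mathlib

section
/- Let θ > 1, a₁, a₂, a₃, a₄ ∈ (0,∞), p₁ ∈ (2θ,∞) and q₁ ∈ (0,2). Set t₁ = 2θ(2θ−q₁)(2θ−2)/(p₁(p₁−q₁)(p₁−2)) and suppose (t₁^{(2θ−q₁)/(p₁−2θ)} − t₁^{(p₁−q₁)/(p₁−2θ)})·[(a₁/a₄)(a₂/a₃)^{(2−q₁)/(p₁−2θ)} + (1/a₄)·a₂^{(p₁−q₁)/(p₁−2θ)}/a₃^{(2θ−q₁)/(p₁−2θ)}] > 1. Then the function h(t) = a₁t² + a₂t^{2θ} − a₃t^{p₁} − a₄t^{q₁} has a global strict maximum at a positive level and a local strict minimum at a negative level on [0,∞). -/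
/- Common framework for normalized solutions of Kirchhoff-Choquard equations
   (Goel-Gupta, "Normalized Solutions to the Kirchhoff-Choquard Equations with
   Combined Growth"). Functions are modelled as `u : EuclideanSpace ℝ (Fin N) → ℝ`. -/

open MeasureTheory Real Filter Topology RealInnerProductSpace

noncomputable section

abbrev Euc (N : ℕ) := EuclideanSpace ℝ (Fin N)

/-- `‖∇u‖₂²`. -/
def gradNormSq (N : ℕ) (u : Euc N → ℝ) : ℝ := ∫ x, ‖gradient u x‖ ^ 2

/-- `‖u‖₂²`. -/
def l2NormSq (N : ℕ) (u : Euc N → ℝ) : ℝ := ∫ x, u x ^ 2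

/-- membership in `H¹(ℝᴺ)`. -/
def MemH1 (N : ℕ) (u : Euc N → ℝ) : Prop :=
  MemLp u 2 (volume : Measure (Euc N)) ∧ Differentiable ℝ u ∧
    MemLp (fun x => gradient u x) 2 (volume : Measure (Euc N))

/-- squared `H¹` norm. -/
def h1NormSq (N : ℕ) (u : Euc N → ℝ) : ℝ := l2NormSq N u + gradNormSq N u

/-- `∫ ∇u·∇v`. -/
def gradInner (N : ℕ) (u v : Euc N → ℝ) : ℝ := ∫ x, ⟪gradient u x, gradient v x⟫

/-- `∫ u v`. -/
def l2Pair (N : ℕ) (u v : Euc N → ℝ) : ℝ := ∫ x, u x * v x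

/-- the nonlocal Choquard term `∫ (I_μ ∗ |u|^t) |u|^t`. -/
def rieszTerm (N : ℕ) (μ t : ℝ) (u : Euc N → ℝ) : ℝ :=
  ∫ x, ∫ y, |u x| ^ t * |u y| ^ t / ‖x - y‖ ^ μ

/-- `∫ (I_μ ∗ |u|^t) |u|^{t-2} u v`. -/
def rieszPair (N : ℕ) (μ t : ℝ) (u v : Euc N → ℝ) : ℝ :=
  ∫ x, (∫ y, |u y| ^ t / ‖x - y‖ ^ μ) * |u x| ^ (t - 2) * u x * v x

/-- the energy functional `J_α`. -/
def Jfun (N : ℕ) (a b θ μ α q p : ℝ) (u : Euc N → ℝ) : ℝ :=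
  a / 2 * gradNormSq N u + b / (2 * θ) * gradNormSq N u ^ θ
    - α / (2 * q) * rieszTerm N μ q u - 1 / (2 * p) * rieszTerm N μ p u

/-- membership in the sphere `S_c`. -/
def InSc (N : ℕ) (c : ℝ) (u : Euc N → ℝ) : Prop := MemH1 N u ∧ l2NormSq N u = c ^ 2

def IsRadial (N : ℕ) (u : Euc N → ℝ) : Prop := ∀ x y : Euc N, ‖x‖ = ‖y‖ → u x = u y

def IsRadialDecreasing (N : ℕ) (u : Euc N → ℝ) : Prop :=
  ∀ x y : Euc N, ‖x‖ ≤ ‖y‖ → u y ≤ u x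

/-- `δ_r = (N(r-2)+μ)/(2r)`. -/
def deltaExp (N : ℕ) (μ r : ℝ) : ℝ := ((N : ℝ) * (r - 2) + μ) / (2 * r)

/-- the upper critical exponent `2*_μ = (2N-μ)/(N-2)`. -/
def tmu (N : ℕ) (μ : ℝ) : ℝ := (2 * (N : ℝ) - μ) / ((N : ℝ) - 2)

/-- the Pohozaev functional `P_α`. -/
def Pfun (N : ℕ) (a b θ μ α q p : ℝ) (u : Euc N → ℝ) : ℝ :=
  a * gradNormSq N u + b * gradNormSq N u ^ θ
    - deltaExp N μ q * α * rieszTerm N μ q u - deltaExp N μ p * rieszTerm N μ p u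

/-- the (Gateaux) derivative of `J_α` at `u` in direction `v`. -/
def Jderiv (N : ℕ) (a b θ μ α q p : ℝ) (u v : Euc N → ℝ) : ℝ :=
  (a + b * gradNormSq N u ^ (θ - 1)) * gradInner N u v
    - α * rieszPair N μ q u v - rieszPair N μ p u v

/-- `u ∈ S_c` is a weak solution of problem (1.1) with Lagrange multiplier `lam`. -/
def IsSolution (N : ℕ) (a b θ μ α q p c lam : ℝ) (u : Euc N → ℝ) : Prop :=
  InSc N c u ∧ ∀ v : Euc N → ℝ, MemH1 N v →
    (a + b * gradNormSq N u ^ (θ - 1)) * gradInner N u v =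
      lam * l2Pair N u v + α * rieszPair N μ q u v + rieszPair N μ p u v

/-- `u` is a critical point of `J_α|_{S_c}`. -/
def IsCriticalPt (N : ℕ) (a b θ μ α q p c : ℝ) (u : Euc N → ℝ) : Prop :=
  ∃ lam : ℝ, IsSolution N a b θ μ α q p c lam u

/-- `u` is a ground state solution of `J_α|_{S_c}`. -/
def IsGroundState (N : ℕ) (a b θ μ α q p c : ℝ) (u : Euc N → ℝ) : Prop :=
  IsCriticalPt N a b θ μ α q p c u ∧
    ∀ v, IsCriticalPt N a b θ μ α q p c v →
      Jfun N a b θ μ α q p u ≤ Jfun N a b θ μ α q p v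

/-- the sharp Gagliardo-Nirenberg constant `C_r`. -/
def GNsharp (N : ℕ) (μ r : ℝ) : ℝ :=
  sInf {C : ℝ | 0 ≤ C ∧ ∀ u : Euc N → ℝ, MemH1 N u →
    rieszTerm N μ r u ≤
      C * gradNormSq N u ^ (r * deltaExp N μ r) * l2NormSq N u ^ (r * (1 - deltaExp N μ r))}

/-- the Hardy-Littlewood-Sobolev best constant `S_{HL}`. -/
def S_HL (N : ℕ) (μ : ℝ) : ℝ :=
  sInf {t : ℝ | ∃ u : Euc N → ℝ, Differentiable ℝ u ∧
    MemLp (fun x => gradient u x) 2 (volume : Measure (Euc N)) ∧ u ≠ 0 ∧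
    t = gradNormSq N u / rieszTerm N μ (tmu N μ) u ^ (((N : ℝ) - 2) / (2 * (N : ℝ) - μ))}

/-- `C_r` for `r < 2*_μ`, and `S_HL^{-2*_μ}` for `r = 2*_μ`. -/
def Cconst (N : ℕ) (μ r : ℝ) : ℝ :=
  if r = tmu N μ then S_HL N μ ^ (-(tmu N μ)) else GNsharp N μ r

/-- the threshold `α₁` of (2.6). -/
def alpha1 (N : ℕ) (μ θ b c q p : ℝ) : ℝ :=
  (b * (θ - q * deltaExp N μ q) /
      (deltaExp N μ p * (p * deltaExp N μ p - q * deltaExp N μ q) * Cconst N μ p *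
        c ^ (2 * p * (1 - deltaExp N μ p)))) ^
    ((θ - q * deltaExp N μ q) / (p * deltaExp N μ p - θ)) *
  (b * (p * deltaExp N μ p - θ) /
    (deltaExp N μ q * (p * deltaExp N μ p - q * deltaExp N μ q) * Cconst N μ q *
      c ^ (2 * q * (1 - deltaExp N μ q))))

/-- the constant `κ` of (2.9). -/
def kappaConst (N : ℕ) (μ θ q p : ℝ) : ℝ :=
  (θ * (θ - q * deltaExp N μ q) * (θ - 1) /
      (p * deltaExp N μ p * (p * deltaExp N μ p - q * deltaExp N μ q) *
        (p * deltaExp N μ p - 1))) ^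
    ((θ - q * deltaExp N μ q) / (p * deltaExp N μ p - θ)) -
  (θ * (θ - q * deltaExp N μ q) * (θ - 1) /
      (p * deltaExp N μ p * (p * deltaExp N μ p - q * deltaExp N μ q) *
        (p * deltaExp N μ p - 1))) ^
    ((p * deltaExp N μ p - q * deltaExp N μ q) / (p * deltaExp N μ p - θ))

/-- the threshold `α₂` of (2.7). -/
def alpha2 (N : ℕ) (μ θ a b c q p : ℝ) : ℝ :=
  kappaConst N μ θ q p * q / Cconst N μ q *
    (a / c ^ (2 * q * (1 - deltaExp N μ q) +
        2 * p * (1 - deltaExp N μ p) * (1 - q * deltaExp N μ q) / (p * deltaExp N μ p - θ)) *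
      (b * p / (θ * Cconst N μ p)) ^ ((1 - q * deltaExp N μ q) / (p * deltaExp N μ p - θ)) +
    2 / c ^ (2 * q * (1 - deltaExp N μ q) +
        2 * p * (1 - deltaExp N μ p) * (θ - q * deltaExp N μ q) / (p * deltaExp N μ p - θ)) *
      ((b / (2 * θ)) ^ ((p * deltaExp N μ p - q * deltaExp N μ q) / (p * deltaExp N μ p - θ)) /
        (Cconst N μ p / (2 * p)) ^ ((θ - q * deltaExp N μ q) / (p * deltaExp N μ p - θ))))

/-- the threshold `α₃` of (2.8). -/
def alpha3 (N : ℕ) (μ θ a b c q : ℝ) : ℝ :=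
  ((S_HL N μ ^ (θ + 1) * (4 * a * b)) ^ (tmu N μ / (2 * tmu N μ - (θ + 1))) *
      (q / (θ - q * deltaExp N μ q))) ^ ((θ - q * deltaExp N μ q) / θ) *
    (b / deltaExp N μ q) ^ (q * deltaExp N μ q / θ) * (tmu N μ - θ) /
    ((tmu N μ - q * deltaExp N μ q) * Cconst N μ q * c ^ (2 * q * (1 - deltaExp N μ q)))

/-- `Υ_{t₀} = {u ∈ S_c : ‖∇u‖₂ < t₀}`. -/
def Upsilon (N : ℕ) (c t₀ : ℝ) : Set (Euc N → ℝ) :=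
  {u | InSc N c u ∧ Real.sqrt (gradNormSq N u) < t₀}

/-- the comparison function `g` of Lemma 4.3. -/
def gComp (N : ℕ) (a b θ μ α q p c : ℝ) (t : ℝ) : ℝ :=
  a / 2 * t ^ (2 : ℝ) + b / (2 * θ) * t ^ (2 * θ)
    - α / (2 * q) * Cconst N μ q * c ^ (2 * q * (1 - deltaExp N μ q)) *
        t ^ (2 * q * deltaExp N μ q)
    - 1 / (2 * p) * Cconst N μ p * c ^ (2 * p * (1 - deltaExp N μ p)) *
        t ^ (2 * p * deltaExp N μ p)

/-- `t₀` is the first zero of `g` on `(0,∞)`. -/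
def IsFirstZero (g : ℝ → ℝ) (t₀ : ℝ) : Prop :=
  0 < t₀ ∧ g t₀ = 0 ∧ ∀ t, 0 < t → t < t₀ → g t ≠ 0

/-- the dilation `(s ⋆ u)(x) = e^{Ns/2} u(e^s x)`. -/
def starMap (N : ℕ) (s : ℝ) (u : Euc N → ℝ) : Euc N → ℝ :=
  fun x => Real.exp ((N : ℝ) * s / 2) * u (Real.exp s • x)

/-- the fiber map `E_u(s) = J_α(s ⋆ u)`. -/
def fiberE (N : ℕ) (a b θ μ α q p : ℝ) (u : Euc N → ℝ) (s : ℝ) : ℝ :=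
  Jfun N a b θ μ α q p (starMap N s u)

/-- `(E_u)''(0)` in closed form. -/
def fiberE2 (N : ℕ) (a b θ μ α q p : ℝ) (u : Euc N → ℝ) : ℝ :=
  2 * a * gradNormSq N u + 2 * θ * b * gradNormSq N u ^ θ
    - α * (2 * q) * deltaExp N μ q ^ 2 * rieszTerm N μ q u
    - 2 * p * deltaExp N μ p ^ 2 * rieszTerm N μ p u

/-- the Pohozaev manifold `𝔓_α`. -/
def Pman (N : ℕ) (a b θ μ α q p c : ℝ) : Set (Euc N → ℝ) :=
  {u | InSc N c u ∧ Pfun N a b θ μ α q p u = 0}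

def PmanPlus (N : ℕ) (a b θ μ α q p c : ℝ) : Set (Euc N → ℝ) :=
  {u | u ∈ Pman N a b θ μ α q p c ∧ 0 < fiberE2 N a b θ μ α q p u}

def PmanMinus (N : ℕ) (a b θ μ α q p c : ℝ) : Set (Euc N → ℝ) :=
  {u | u ∈ Pman N a b θ μ α q p c ∧ fiberE2 N a b θ μ α q p u < 0}

def PmanZero (N : ℕ) (a b θ μ α q p c : ℝ) : Set (Euc N → ℝ) :=
  {u | u ∈ Pman N a b θ μ α q p c ∧ fiberE2 N a b θ μ α q p u = 0}

/-- a Palais-Smale sequence for `J_α|_{S_c}` at level `l` (Lagrange-multiplier form). -/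
def IsPalaisSmale (N : ℕ) (a b θ μ α q p c l : ℝ) (un : ℕ → Euc N → ℝ) : Prop :=
  (∀ n, InSc N c (un n)) ∧
  Tendsto (fun n => Jfun N a b θ μ α q p (un n)) atTop (𝓝 l) ∧
  ∃ lam : ℕ → ℝ, ∃ ε : ℕ → ℝ, Tendsto ε atTop (𝓝 0) ∧
    ∀ n, ∀ v : Euc N → ℝ, MemH1 N v → h1NormSq N v ≤ 1 →
      |Jderiv N a b θ μ α q p (un n) v - lam n * l2Pair N (un n) v| ≤ ε n

/-- strong convergence in `H¹(ℝᴺ)`. -/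
def StrongH1Tendsto (N : ℕ) (un : ℕ → Euc N → ℝ) (u : Euc N → ℝ) : Prop :=
  Tendsto (fun n => h1NormSq N (fun x => un n x - u x)) atTop (𝓝 0)

/-- weak convergence in `H¹(ℝᴺ)`. -/
def WeakH1Tendsto (N : ℕ) (un : ℕ → Euc N → ℝ) (u : Euc N → ℝ) : Prop :=
  ∀ v : Euc N → ℝ, MemH1 N v →
    Tendsto (fun n => l2Pair N (un n) v + gradInner N (un n) v) atTop
      (𝓝 (l2Pair N u v + gradInner N u v))

/-- the scalar function `h(t) = a₁t² + a₂t^{2θ} - a₃t^{p₁} - a₄t^{q₁}` of Lemma 4.2. -/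
def hfun (θ a1 a2 a3 a4 p1 q1 : ℝ) (t : ℝ) : ℝ :=
  a1 * t ^ (2 : ℝ) + a2 * t ^ (2 * θ) - a3 * t ^ p1 - a4 * t ^ q1

/-- the constant `t₁` of Lemma 4.2. -/
def tOne (θ p1 q1 : ℝ) : ℝ :=
  2 * θ * (2 * θ - q1) * (2 * θ - 2) / (p1 * (p1 - q1) * (p1 - 2))

/-!
Writing `h'(t) = t^{q₁-1} φ(t)` with
`φ(t) = 2a₁t^{2-q₁} + 2θa₂t^{2θ-q₁} - p₁a₃t^{p₁-q₁} - q₁a₄`, one finds `φ'(t) = t^{1-q₁} ψ(t)`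
where `ψ(t) = A + Bt^{2θ-2} - Ct^{p₁-2}` with `A, B, C > 0`. Since `t^{2-p₁} ψ(t)` is strictly
decreasing, `ψ` changes sign exactly once, so `φ` first increases and then decreases. As
`φ(0) = -q₁a₄ < 0` and `φ → -∞`, the function `h` (with `h(0) = 0`) is decreasing, increasing,
decreasing as soon as `φ` takes a positive value, which happens as soon as `h` takes one. This
gives the strict global maximum and the strict local minimum below `0`.

The hypothesis makes `h` positive at `T = (t₁a₂/a₃)^{1/(p₁-2θ)}`: there `a₃T^{p₁} = t₁a₂T^{2θ}`,
so `h(T) = T^{q₁}(a₁T^{2-q₁} + (1 - t₁)a₂T^{2θ-q₁} - a₄)`, and the hypothesis bounds the bracket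
from below since `t₁^{(2θ-q₁)/(p₁-2θ)}(1 - t₁) ≤ t₁^{(2-q₁)/(p₁-2θ)}` (the hypothesis forces
`t₁ < 1`).
-/

open Set

lemma eventually_mul_rpow_lt_mul_rpow (c : ℝ) {ε e γ : ℝ} (hε : 0 < ε) (he : e < γ) :
    ∀ᶠ t in atTop, c * t ^ e < ε * t ^ γ := by
  have hlim : Tendsto (fun t : ℝ => c * t ^ (e - γ)) atTop (𝓝 0) := by
    simpa [neg_sub] using (tendsto_rpow_neg_atTop (sub_pos.2 he)).const_mul c
  filter_upwards [hlim.eventually (gt_mem_nhds hε), eventually_gt_atTop 0] with t hlt ht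
  have hsplit : t ^ e = t ^ (e - γ) * t ^ γ := by rw [← rpow_add ht]; ring_nf
  rw [hsplit, ← mul_assoc]
  exact mul_lt_mul_of_pos_right hlt (rpow_pos_of_pos ht γ)

lemma exists_sign_change_of_strictAntiOn {k : ℝ → ℝ} {a b : ℝ} (hk : StrictAntiOn k (Ioi 0))
    (hkc : ContinuousOn k (Ioi 0)) (ha : 0 < a) (hb : 0 < b) (hka : 0 < k a) (hkb : k b < 0) :
    ∃ σ > 0, (∀ t ∈ Ioo 0 σ, 0 < k t) ∧ ∀ t, σ < t → k t < 0 := by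
  have hab : a < b := by
    by_contra! hba
    linarith [hk.antitoneOn hb ha hba]
  obtain ⟨σ, hσ, hkσ⟩ : ∃ σ ∈ Icc a b, k σ = 0 :=
    intermediate_value_Icc' hab.le (hkc.mono fun t ht => ha.trans_le ht.1) ⟨hkb.le, hka.le⟩
  have hσ0 : 0 < σ := ha.trans_le hσ.1
  refine ⟨σ, hσ0, fun t ht => ?_, fun t ht => ?_⟩
  · simpa [hkσ] using hk ht.1 hσ0 ht.2
  · simpa [hkσ] using hk hσ0 (hσ0.trans ht) ht

lemma exists_pos_add_rpow_sub_rpow {A B β : ℝ} (C α : ℝ) (hA : 0 < A) (hB : 0 ≤ B)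
    (hβ : 0 < β) : ∃ a > 0, 0 < A + B * a ^ α - C * a ^ β := by
  have hlim : Tendsto (fun t : ℝ => C * t ^ β) (𝓝[>] 0) (𝓝 0) := by
    simpa [zero_rpow hβ.ne'] using
      (((continuous_rpow_const hβ.le).tendsto 0).const_mul C).mono_left nhdsWithin_le_nhds
  obtain ⟨a, hCa, ha⟩ := ((hlim.eventually (gt_mem_nhds hA)).and self_mem_nhdsWithin).exists
  exact ⟨a, ha, by nlinarith [mul_nonneg hB (rpow_nonneg (le_of_lt ha) α)]⟩

lemma exists_add_rpow_sub_rpow_neg {C α β : ℝ} (A B : ℝ) (hC : 0 < C) (hαβ : α < β)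
    (hβ : 0 < β) : ∃ b > 0, A + B * b ^ α - C * b ^ β < 0 := by
  obtain ⟨b, ⟨hAb, hBb⟩, hb⟩ := (((eventually_mul_rpow_lt_mul_rpow A (half_pos hC) hβ).and
    (eventually_mul_rpow_lt_mul_rpow B (half_pos hC) hαβ)).and (eventually_gt_atTop 0)).exists
  rw [rpow_zero, mul_one] at hAb
  exact ⟨b, hb, by linarith⟩

lemma exists_pos_neg_add_rpow_sub_rpow {A B C α β : ℝ} (hA : 0 < A) (hB : 0 ≤ B) (hC : 0 < C)
    (hαβ : α < β) (hβ : 0 < β) :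
    ∃ σ > 0, (∀ t ∈ Ioo 0 σ, 0 < A + B * t ^ α - C * t ^ β) ∧
      ∀ t, σ < t → A + B * t ^ α - C * t ^ β < 0 := by
  set k : ℝ → ℝ := fun t => A * t ^ (-β) + B * t ^ (α - β) - C
  have hfactor : ∀ t > 0, A + B * t ^ α - C * t ^ β = t ^ β * k t := by
    intro t ht
    have h1 : t ^ β * t ^ (-β) = 1 := by rw [← rpow_add ht]; simp
    have h2 : t ^ β * t ^ (α - β) = t ^ α := by rw [← rpow_add ht]; ring_nf
    linear_combination (-A) * h1 - B * h2
  have hanti : StrictAntiOn k (Ioi 0) := by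
    intro x hx y _ hxy
    have h1 := rpow_lt_rpow_of_neg hx hxy (neg_lt_zero.2 hβ)
    have h2 := rpow_le_rpow_of_nonpos hx hxy.le (sub_nonpos.2 hαβ.le)
    nlinarith [mul_le_mul_of_nonneg_left h2 hB]
  have hcont : ContinuousOn k (Ioi 0) := by
    have hpow (e : ℝ) : ContinuousOn (fun t : ℝ => t ^ e) (Ioi 0) :=
      continuousOn_id.rpow_const fun t ht => Or.inl (ne_of_gt ht)
    exact ((continuousOn_const.mul (hpow _)).add (continuousOn_const.mul (hpow _))).sub
      continuousOn_const
  obtain ⟨a, ha, hψa⟩ := exists_pos_add_rpow_sub_rpow C α hA hB hβ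
  obtain ⟨b, hb, hψb⟩ := exists_add_rpow_sub_rpow_neg A B hC hαβ hβ
  rw [hfactor a ha] at hψa
  rw [hfactor b hb] at hψb
  obtain ⟨σ, hσ, hpos, hneg⟩ := exists_sign_change_of_strictAntiOn hanti hcont ha hb
    (pos_of_mul_pos_right hψa (rpow_nonneg ha.le β))
    (neg_of_mul_neg_right hψb (rpow_nonneg hb.le β))
  refine ⟨σ, hσ, fun t ht => ?_, fun t ht => ?_⟩
  · rw [hfactor t ht.1]
    exact mul_pos (rpow_pos_of_pos ht.1 β) (hpos t ht)
  · rw [hfactor t (hσ.trans ht)]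
    exact mul_neg_of_pos_of_neg (rpow_pos_of_pos (hσ.trans ht) β) (hneg t ht)

lemma exists_neg_pos_neg_of_strictMonoOn_strictAntiOn {φ : ℝ → ℝ} {σ R : ℝ} (hσ : 0 ≤ σ)
    (hσR : σ < R) (hcont : ContinuousOn φ (Ici 0)) (hmono : StrictMonoOn φ (Icc 0 σ))
    (hanti : StrictAntiOn φ (Ici σ)) (h0 : φ 0 < 0) (hφσ : 0 < φ σ) (hR : φ R < 0) :
    ∃ s1 s2, 0 < s1 ∧ s1 < s2 ∧ (∀ t ∈ Ioo 0 s1, φ t < 0) ∧ (∀ t ∈ Ioo s1 s2, 0 < φ t) ∧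
      ∀ t, s2 < t → φ t < 0 := by
  obtain ⟨s1, hs1, hφs1⟩ :=
    intermediate_value_Ioo hσ (hcont.mono Icc_subset_Ici_self) ⟨h0, hφσ⟩
  obtain ⟨s2, hs2, hφs2⟩ :=
    intermediate_value_Ioo' hσR.le (hcont.mono fun t ht => hσ.trans ht.1) ⟨hR, hφσ⟩
  refine ⟨s1, s2, hs1.1, hs1.2.trans hs2.1, fun t ht => ?_, fun t ht => ?_, fun t ht => ?_⟩
  · exact hφs1 ▸ hmono ⟨ht.1.le, (ht.2.trans hs1.2).le⟩ ⟨hs1.1.le, hs1.2.le⟩ ht.2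
  · rcases le_or_gt t σ with htσ | hσt
    · exact hφs1 ▸ hmono ⟨hs1.1.le, hs1.2.le⟩ ⟨(hs1.1.trans ht.1).le, htσ⟩ ht.1
    · exact hφs2 ▸ hanti hσt.le hs2.1.le ht.2
  · exact hφs2 ▸ hanti hs2.1.le (hs2.1.trans ht).le ht

lemma strictAntiOn_strictMonoOn_strictAntiOn_of_hasDerivAt_mul {f w g : ℝ → ℝ} {s1 s2 : ℝ}
    (hs1 : 0 ≤ s1) (hs12 : s1 ≤ s2) (hf : ContinuousOn f (Ici 0))
    (hf' : ∀ t > 0, HasDerivAt f (w t * g t) t) (hw : ∀ t > 0, 0 < w t)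
    (hneg1 : ∀ t ∈ Ioo 0 s1, g t < 0) (hpos : ∀ t ∈ Ioo s1 s2, 0 < g t)
    (hneg2 : ∀ t, s2 < t → g t < 0) :
    StrictAntiOn f (Icc 0 s1) ∧ StrictMonoOn f (Icc s1 s2) ∧ StrictAntiOn f (Ici s2) := by
  have hderiv (s : Set ℝ) (t : ℝ) (ht : 0 < t) : HasDerivWithinAt f (w t * g t) s t :=
    (hf' t ht).hasDerivWithinAt
  refine ⟨strictAntiOn_of_hasDerivWithinAt_neg (f' := fun t => w t * g t) (convex_Icc 0 s1)
      (hf.mono Icc_subset_Ici_self) (fun t ht => ?_) (fun t ht => ?_),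
    strictMonoOn_of_hasDerivWithinAt_pos (f' := fun t => w t * g t) (convex_Icc s1 s2)
      (hf.mono fun t ht => hs1.trans ht.1) (fun t ht => ?_) (fun t ht => ?_),
    strictAntiOn_of_hasDerivWithinAt_neg (f' := fun t => w t * g t) (convex_Ici s2)
      (hf.mono fun t ht => (hs1.trans hs12).trans ht) (fun t ht => ?_) (fun t ht => ?_)⟩ <;>
  simp only [interior_Icc, interior_Ici, mem_Ioo, mem_Ioi] at ht
  · exact hderiv _ t ht.1
  · exact mul_neg_of_pos_of_neg (hw t ht.1) (hneg1 t ht)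
  · exact hderiv _ t (hs1.trans_lt ht.1)
  · exact mul_pos (hw t (hs1.trans_lt ht.1)) (hpos t ht)
  · exact hderiv _ t ((hs1.trans hs12).trans_lt ht)
  · exact mul_neg_of_pos_of_neg (hw t ((hs1.trans hs12).trans_lt ht)) (hneg2 t ht)

lemma exists_strict_max_and_strict_local_min {f : ℝ → ℝ} {s1 s2 T : ℝ} (hs1 : 0 < s1)
    (hs12 : s1 < s2) (hanti1 : StrictAntiOn f (Icc 0 s1)) (hmono : StrictMonoOn f (Icc s1 s2))
    (hanti2 : StrictAntiOn f (Ici s2)) (hT : 0 ≤ T) (hfT : f 0 < f T) :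
    (∃ tM ∈ Ici (0 : ℝ), f 0 < f tM ∧ ∀ t ∈ Ici (0 : ℝ), t ≠ tM → f t < f tM) ∧
    (∃ tm ∈ Ici (0 : ℝ), f tm < f 0 ∧
      ∃ ε > (0 : ℝ), ∀ t ∈ Ici (0 : ℝ), t ≠ tm → |t - tm| < ε → f tm < f t) := by
  have hle0 : ∀ t ∈ Icc 0 s1, f t ≤ f 0 := fun t ht =>
    hanti1.antitoneOn ⟨le_rfl, hs1.le⟩ ht ht.1
  have hlt_s2 : ∀ t, s1 < t → t ≠ s2 → f t < f s2 := by
    intro t ht hne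
    rcases hne.lt_or_gt with hlt | hgt
    · exact hmono ⟨ht.le, hlt.le⟩ ⟨hs12.le, le_rfl⟩ hlt
    · exact hanti2 (le_refl s2) hgt.le hgt
  have hs2 : f 0 < f s2 := by
    rcases le_or_gt T s1 with hTs1 | hs1T
    · exact absurd (hle0 T ⟨hT, hTs1⟩) (not_le.2 hfT)
    · rcases eq_or_ne T s2 with rfl | hne
      · exact hfT
      · exact hfT.trans (hlt_s2 T hs1T hne)
  refine ⟨⟨s2, hs1.le.trans hs12.le, hs2, fun t ht hne => ?_⟩,
    ⟨s1, hs1.le, hanti1 ⟨le_rfl, hs1.le⟩ ⟨hs1.le, le_rfl⟩ hs1, s2 - s1, sub_pos.2 hs12,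
      fun t ht hne hdist => ?_⟩⟩
  · rcases le_or_gt t s1 with hts1 | hs1t
    · exact (hle0 t ⟨ht, hts1⟩).trans_lt hs2
    · exact hlt_s2 t hs1t hne
  · rcases hne.lt_or_gt with hlt | hgt
    · exact hanti1 ⟨ht, hlt.le⟩ ⟨hs1.le, le_rfl⟩ hlt
    · exact hmono ⟨le_rfl, hs12.le⟩ ⟨hgt.le, by linarith [(abs_lt.1 hdist).2]⟩ hgt

section hfun

variable {θ a1 a2 a3 a4 p1 q1 : ℝ}

def hfunDerivFactor (θ a1 a2 a3 a4 p1 q1 t : ℝ) : ℝ :=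
  2 * a1 * t ^ (2 - q1) + 2 * θ * a2 * t ^ (2 * θ - q1) - p1 * a3 * t ^ (p1 - q1) - q1 * a4

lemma hfun_zero (hθ : θ ≠ 0) (hp1 : p1 ≠ 0) (hq1 : q1 ≠ 0) :
    hfun θ a1 a2 a3 a4 p1 q1 0 = 0 := by
  simp [hfun, zero_rpow, hθ, hp1, hq1]

lemma hfun_eq_rpow_mul {t : ℝ} (ht : 0 < t) :
    hfun θ a1 a2 a3 a4 p1 q1 t =
      t ^ q1 * (a1 * t ^ (2 - q1) + a2 * t ^ (2 * θ - q1) - a3 * t ^ (p1 - q1) - a4) := by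
  have hsplit (e : ℝ) : t ^ q1 * t ^ (e - q1) = t ^ e := by rw [← rpow_add ht]; ring_nf
  simp only [hfun]
  linear_combination (-a1) * hsplit 2 - a2 * hsplit (2 * θ) + a3 * hsplit p1

lemma continuous_hfun (hθ : 0 ≤ θ) (hp1 : 0 ≤ p1) (hq1 : 0 ≤ q1) :
    Continuous (hfun θ a1 a2 a3 a4 p1 q1) := by
  have hpow {e : ℝ} (he : 0 ≤ e) := continuous_rpow_const he
  exact (((continuous_const.mul (hpow zero_le_two)).add
    (continuous_const.mul (hpow (by positivity)))).sub (continuous_const.mul (hpow hp1))).sub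
    (continuous_const.mul (hpow hq1))

lemma hasDerivAt_hfun {t : ℝ} (ht : 0 < t) :
    HasDerivAt (hfun θ a1 a2 a3 a4 p1 q1)
      (t ^ (q1 - 1) * hfunDerivFactor θ a1 a2 a3 a4 p1 q1 t) t := by
  have hpow (e : ℝ) : HasDerivAt (fun s : ℝ => s ^ e) (e * t ^ (e - 1)) t :=
    hasDerivAt_rpow_const (Or.inl ht.ne')
  have hsplit (e : ℝ) : t ^ (q1 - 1) * t ^ (e - q1) = t ^ (e - 1) := by
    rw [← rpow_add ht]; ring_nf
  refine (((((hpow 2).const_mul a1).add ((hpow (2 * θ)).const_mul a2)).sub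
    ((hpow p1).const_mul a3)).sub ((hpow q1).const_mul a4)).congr_deriv ?_
  simp only [hfunDerivFactor]
  linear_combination (-2 * a1) * hsplit 2 - 2 * θ * a2 * hsplit (2 * θ) + p1 * a3 * hsplit p1

lemma continuous_hfunDerivFactor (hq2 : q1 ≤ 2) (hqθ : q1 ≤ 2 * θ) (hqp : q1 ≤ p1) :
    Continuous (hfunDerivFactor θ a1 a2 a3 a4 p1 q1) := by
  have hpow {e : ℝ} (he : 0 ≤ e) := continuous_rpow_const he
  exact (((continuous_const.mul (hpow (sub_nonneg.2 hq2))).add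
    (continuous_const.mul (hpow (sub_nonneg.2 hqθ)))).sub
    (continuous_const.mul (hpow (sub_nonneg.2 hqp)))).sub continuous_const

lemma hfunDerivFactor_zero (hq2 : q1 < 2) (hqθ : q1 < 2 * θ) (hqp : q1 < p1) :
    hfunDerivFactor θ a1 a2 a3 a4 p1 q1 0 = -(q1 * a4) := by
  simp [hfunDerivFactor, zero_rpow, (sub_pos.2 hq2).ne', (sub_pos.2 hqθ).ne',
    (sub_pos.2 hqp).ne']

lemma hasDerivAt_hfunDerivFactor {t : ℝ} (ht : 0 < t) :
    HasDerivAt (hfunDerivFactor θ a1 a2 a3 a4 p1 q1)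
      (t ^ (1 - q1) * (2 * a1 * (2 - q1) + 2 * θ * a2 * (2 * θ - q1) * t ^ (2 * θ - 2)
        - p1 * a3 * (p1 - q1) * t ^ (p1 - 2))) t := by
  have hpow (e : ℝ) : HasDerivAt (fun s : ℝ => s ^ (e - q1)) ((e - q1) * t ^ (e - q1 - 1)) t :=
    hasDerivAt_rpow_const (Or.inl ht.ne')
  have hsplit (e : ℝ) : t ^ (1 - q1) * t ^ (e - 2) = t ^ (e - q1 - 1) := by
    rw [← rpow_add ht]; ring_nf
  have h2 : t ^ (2 - q1 - 1) = t ^ (1 - q1) := by ring_nf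
  refine (((((hpow 2).const_mul (2 * a1)).add ((hpow (2 * θ)).const_mul (2 * θ * a2))).sub
    ((hpow p1).const_mul (p1 * a3))).sub_const (q1 * a4)).congr_deriv ?_
  linear_combination 2 * a1 * (2 - q1) * h2 - 2 * θ * a2 * (2 * θ - q1) * hsplit (2 * θ)
    + p1 * a3 * (p1 - q1) * hsplit p1

lemma eventually_hfunDerivFactor_neg (hθ : 1 < θ) (ha3 : 0 < a3) (ha4 : 0 < a4)
    (hp1 : 2 * θ < p1) (hq1 : 0 < q1) :
    ∀ᶠ t in atTop, hfunDerivFactor θ a1 a2 a3 a4 p1 q1 t < 0 := by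
  have hC : 0 < p1 * a3 / 2 := by nlinarith
  filter_upwards [eventually_mul_rpow_lt_mul_rpow (2 * a1) hC (by linarith : 2 - q1 < p1 - q1),
    eventually_mul_rpow_lt_mul_rpow (2 * θ * a2) hC (by linarith : 2 * θ - q1 < p1 - q1)]
    with t h1 h2
  simp only [hfunDerivFactor]
  nlinarith [mul_pos hq1 ha4]

lemma exists_strictMonoOn_strictAntiOn_hfunDerivFactor (hθ : 1 < θ) (ha1 : 0 < a1)
    (ha2 : 0 ≤ a2) (ha3 : 0 < a3) (hp1 : 2 * θ < p1) (hq2 : q1 < 2) :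
    ∃ σ > 0, StrictMonoOn (hfunDerivFactor θ a1 a2 a3 a4 p1 q1) (Icc 0 σ) ∧
      StrictAntiOn (hfunDerivFactor θ a1 a2 a3 a4 p1 q1) (Ici σ) := by
  obtain ⟨σ, hσ, hpos, hneg⟩ := exists_pos_neg_add_rpow_sub_rpow
    (mul_pos (by linarith) (by linarith) : 0 < 2 * a1 * (2 - q1))
    (mul_nonneg (by positivity) (by linarith) : 0 ≤ 2 * θ * a2 * (2 * θ - q1))
    (mul_pos (by nlinarith) (by linarith) : 0 < p1 * a3 * (p1 - q1))
    (by linarith : 2 * θ - 2 < p1 - 2) (by linarith)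
  have hcont : Continuous (hfunDerivFactor θ a1 a2 a3 a4 p1 q1) :=
    continuous_hfunDerivFactor hq2.le (by linarith) (by linarith)
  obtain ⟨-, hmono, hanti⟩ := strictAntiOn_strictMonoOn_strictAntiOn_of_hasDerivAt_mul le_rfl
    hσ.le hcont.continuousOn (fun t ht => hasDerivAt_hfunDerivFactor ht)
    (fun t ht => rpow_pos_of_pos ht _) (fun t ht => (lt_asymm ht.1 ht.2).elim) hpos hneg
  exact ⟨σ, hσ, hmono, hanti⟩

lemma exists_hfun_strictAntiOn_strictMonoOn_strictAntiOn (hθ : 1 < θ) (ha1 : 0 < a1)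
    (ha2 : 0 ≤ a2) (ha3 : 0 < a3) (ha4 : 0 < a4) (hp1 : 2 * θ < p1) (hq1 : 0 < q1) (hq2 : q1 < 2)
    {T : ℝ} (hT : 0 ≤ T) (hhT : 0 < hfun θ a1 a2 a3 a4 p1 q1 T) :
    ∃ s1 s2, 0 < s1 ∧ s1 < s2 ∧ StrictAntiOn (hfun θ a1 a2 a3 a4 p1 q1) (Icc 0 s1) ∧
      StrictMonoOn (hfun θ a1 a2 a3 a4 p1 q1) (Icc s1 s2) ∧
      StrictAntiOn (hfun θ a1 a2 a3 a4 p1 q1) (Ici s2) := by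
  have hcont : Continuous (hfun θ a1 a2 a3 a4 p1 q1) :=
    continuous_hfun (by linarith) (by linarith) hq1.le
  obtain ⟨σ, hσ, hmono, hanti⟩ :=
    exists_strictMonoOn_strictAntiOn_hfunDerivFactor (a4 := a4) hθ ha1 ha2 ha3 hp1 hq2
  have hφσ : 0 < hfunDerivFactor θ a1 a2 a3 a4 p1 q1 σ := by
    by_contra! hle
    have hφ_nonpos : ∀ t > 0, hfunDerivFactor θ a1 a2 a3 a4 p1 q1 t ≤ 0 := fun t ht => by
      rcases le_total t σ with htσ | hσt
      · exact (hmono.monotoneOn ⟨ht.le, htσ⟩ ⟨hσ.le, le_rfl⟩ htσ).trans hle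
      · exact (hanti.antitoneOn (le_refl σ) hσt hσt).trans hle
    have hh_anti : AntitoneOn (hfun θ a1 a2 a3 a4 p1 q1) (Ici 0) :=
      antitoneOn_of_hasDerivWithinAt_nonpos (convex_Ici 0) hcont.continuousOn
        (fun t ht => (hasDerivAt_hfun (interior_Ici.subset ht)).hasDerivWithinAt)
        (fun t ht => mul_nonpos_of_nonneg_of_nonpos (rpow_nonneg (interior_Ici.subset ht).le _)
          (hφ_nonpos t (interior_Ici.subset ht)))
    have := hh_anti self_mem_Ici hT hT
    rw [hfun_zero (by linarith) (by linarith) hq1.ne'] at this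
    linarith
  obtain ⟨R, hR, hσR⟩ :=
    ((eventually_hfunDerivFactor_neg (a1 := a1) (a2 := a2) hθ ha3 ha4 hp1 hq1).and
      (eventually_gt_atTop σ)).exists
  have hφ0 : hfunDerivFactor θ a1 a2 a3 a4 p1 q1 0 < 0 := by
    rw [hfunDerivFactor_zero hq2 (by linarith) (by linarith)]
    exact neg_neg_of_pos (mul_pos hq1 ha4)
  obtain ⟨s1, s2, hs1, hs12, hneg1, hpos, hneg2⟩ :=
    exists_neg_pos_neg_of_strictMonoOn_strictAntiOn hσ.le hσR
      (continuous_hfunDerivFactor hq2.le (by linarith) (by linarith)).continuousOn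
      hmono hanti hφ0 hφσ hR
  exact ⟨s1, s2, hs1, hs12, strictAntiOn_strictMonoOn_strictAntiOn_of_hasDerivAt_mul hs1.le
    hs12.le hcont.continuousOn (fun t ht => hasDerivAt_hfun ht) (fun t ht => rpow_pos_of_pos ht _)
    hneg1 hpos hneg2⟩

lemma hfun_eq_of_rpow_eq {t T : ℝ} (hT : 0 < T) (hbal : a3 * T ^ (p1 - 2 * θ) = t * a2) :
    hfun θ a1 a2 a3 a4 p1 q1 T =
      T ^ q1 * (a1 * T ^ (2 - q1) + (1 - t) * a2 * T ^ (2 * θ - q1) - a4) := by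
  have hsplit : T ^ (p1 - q1) = T ^ (p1 - 2 * θ) * T ^ (2 * θ - q1) := by
    rw [← rpow_add hT]; ring_nf
  rw [hfun_eq_rpow_mul hT, hsplit]
  linear_combination (-(T ^ q1 * T ^ (2 * θ - q1))) * hbal

lemma hfun_pos_of_condition (hθ : 1 ≤ θ) (ha1 : 0 ≤ a1) (ha2 : 0 < a2) (ha3 : 0 < a3)
    (ha4 : 0 < a4) (hp1 : 2 * θ < p1) {t : ℝ} (ht : 0 < t)
    (hcond : (t ^ ((2 * θ - q1) / (p1 - 2 * θ)) - t ^ ((p1 - q1) / (p1 - 2 * θ))) *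
      (a1 / a4 * (a2 / a3) ^ ((2 - q1) / (p1 - 2 * θ)) +
        1 / a4 * (a2 ^ ((p1 - q1) / (p1 - 2 * θ)) / a3 ^ ((2 * θ - q1) / (p1 - 2 * θ)))) > 1) :
    0 < hfun θ a1 a2 a3 a4 p1 q1 ((t * (a2 / a3)) ^ (p1 - 2 * θ)⁻¹) := by
  set s := p1 - 2 * θ
  have hs : 0 < s := sub_pos.2 hp1
  set X := a2 / a3
  have hX : 0 < X := div_pos ha2 ha3
  set D := (2 - q1) / s with hD
  set E := (2 * θ - q1) / s with hE
  set T := (t * X) ^ s⁻¹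
  have hT : 0 < T := rpow_pos_of_pos (mul_pos ht hX) _
  have hTpow (e : ℝ) : T ^ e = t ^ (e / s) * X ^ (e / s) := by
    rw [← rpow_mul (mul_pos ht hX).le, inv_mul_eq_div, mul_rpow ht.le hX.le]
  have hbal : a3 * T ^ s = t * a2 := by
    rw [rpow_inv_rpow (mul_pos ht hX).le hs.ne', mul_left_comm, mul_div_cancel₀ a2 ha3.ne']
  have hexp : (p1 - q1) / s = 1 + E := by
    rw [hE]; field_simp; ring
  have htE : t ^ ((p1 - q1) / s) = t * t ^ E := by rw [hexp, rpow_add ht, rpow_one]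
  have ha2E : a2 ^ ((p1 - q1) / s) / a3 ^ E = a2 * X ^ E := by
    rw [hexp, rpow_add ha2, rpow_one, div_rpow ha2.le ha3.le]; ring
  rw [htE, ha2E] at hcond
  have hcond' : a4 < (t ^ E - t * t ^ E) * (a1 * X ^ D + a2 * X ^ E) := by
    have hscale : (t ^ E - t * t ^ E) * (a1 * X ^ D + a2 * X ^ E) =
        a4 * ((t ^ E - t * t ^ E) * (a1 / a4 * X ^ D + 1 / a4 * (a2 * X ^ E))) := by
      field_simp
    rw [hscale]
    nlinarith
  have ht1 : t < 1 := by
    by_contra! h1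
    have hfirst : t ^ E - t * t ^ E ≤ 0 := by nlinarith [rpow_pos_of_pos ht E]
    have hsecond : 0 ≤ a1 * X ^ D + a2 * X ^ E := by positivity
    nlinarith [mul_nonpos_of_nonpos_of_nonneg hfirst hsecond]
  have hcmp : t ^ E * (1 - t) ≤ t ^ D := by
    have h1 : t ^ E ≤ t ^ D :=
      rpow_le_rpow_of_exponent_ge ht ht1.le (div_le_div_of_nonneg_right (by linarith) hs.le)
    nlinarith [rpow_pos_of_pos ht E]
  rw [hfun_eq_of_rpow_eq hT hbal, hTpow (2 - q1), hTpow (2 * θ - q1), ← hD, ← hE]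
  refine mul_pos (rpow_pos_of_pos hT _) ?_
  nlinarith [mul_nonneg (mul_nonneg ha1 (rpow_nonneg hX.le D)) (sub_nonneg.2 hcmp)]

end hfun

/-- **Lemma 4.2** (Statement 11): under condition (4.1), `h` has a global strict
maximum at a positive level and a local strict minimum at a negative level on `[0,∞)`. -/
theorem statement11
    (θ a1 a2 a3 a4 p1 q1 : ℝ)
    (hθ : 1 < θ)
    (ha1 : 0 < a1) (ha2 : 0 < a2) (ha3 : 0 < a3) (ha4 : 0 < a4)
    (hp1 : 2 * θ < p1) (hq1 : 0 < q1) (hq2 : q1 < 2)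
    (hineq :
      (tOne θ p1 q1 ^ ((2 * θ - q1) / (p1 - 2 * θ)) -
        tOne θ p1 q1 ^ ((p1 - q1) / (p1 - 2 * θ))) *
      (a1 / a4 * (a2 / a3) ^ ((2 - q1) / (p1 - 2 * θ)) +
        1 / a4 * (a2 ^ ((p1 - q1) / (p1 - 2 * θ)) / a3 ^ ((2 * θ - q1) / (p1 - 2 * θ)))) > 1) :
    (∃ tM ∈ Set.Ici (0 : ℝ), 0 < hfun θ a1 a2 a3 a4 p1 q1 tM ∧
      ∀ t ∈ Set.Ici (0 : ℝ), t ≠ tM →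
        hfun θ a1 a2 a3 a4 p1 q1 t < hfun θ a1 a2 a3 a4 p1 q1 tM) ∧
    (∃ tm ∈ Set.Ici (0 : ℝ), hfun θ a1 a2 a3 a4 p1 q1 tm < 0 ∧
      ∃ ε > (0 : ℝ), ∀ t ∈ Set.Ici (0 : ℝ), t ≠ tm → |t - tm| < ε →
        hfun θ a1 a2 a3 a4 p1 q1 tm < hfun θ a1 a2 a3 a4 p1 q1 t) := by
  have htOne : 0 < tOne θ p1 q1 := by
    unfold tOne
    apply div_pos <;> apply mul_pos <;> (try apply mul_pos) <;> linarith
  set T := (tOne θ p1 q1 * (a2 / a3)) ^ (p1 - 2 * θ)⁻¹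
  have hT : 0 ≤ T := rpow_nonneg (by positivity) _
  have hhT : 0 < hfun θ a1 a2 a3 a4 p1 q1 T :=
    hfun_pos_of_condition hθ.le ha1.le ha2 ha3 ha4 hp1 htOne hineq
  obtain ⟨s1, s2, hs1, hs12, hanti1, hmono, hanti2⟩ :=
    exists_hfun_strictAntiOn_strictMonoOn_strictAntiOn hθ ha1 ha2.le ha3 ha4 hp1 hq1 hq2 hT hhT
  have h0 : hfun θ a1 a2 a3 a4 p1 q1 0 = 0 :=
    hfun_zero (by linarith : (0 : ℝ) < θ).ne' (by linarith : (0 : ℝ) < p1).ne' hq1.ne'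
  rw [← h0] at hhT
  simpa only [h0] using
    exists_strict_max_and_strict_local_min hs1 hs12 hanti1 hmono hanti2 hT hhT
end
end

section
/- Let 2_{μ,*} < q < A*, B* < p ≤ 2*_μ, and 0 < α < α₂. Then the function g(t) = (a/2)t² + (b/(2θ))t^{2θ} − (α/(2q))C_q c^{2q(1−δ_q)} t^{2qδ_q} − (1/(2p))C_p c^{2p(1−δ_p)} t^{2pδ_p} on [0,∞) has a global strict maximum at a positive level and a local strict minimum at a negative level; moreover there exist 0 < t₀ < t₁ (depending on c and α) such that g(t₀) = g(t₁) = 0 and g(t) > 0 if and only if t ∈ (t₀, t₁). -/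
/- Common framework for normalized solutions of Kirchhoff-Choquard equations
   (Goel-Gupta, "Normalized Solutions to the Kirchhoff-Choquard Equations with
   Combined Growth"). Functions are modelled as `u : EuclideanSpace ℝ (Fin N) → ℝ`. -/

open MeasureTheory Real Filter Topology RealInnerProductSpace

noncomputable section

/-!
Write `g t = A t ^ i₁ + B t ^ i₂ - C t ^ s - E t ^ S` with positive coefficients and
`0 < s < i₁ < i₂ < S`. Then `g' t = t ^ (s - 1) F t`, where `F` has the shape
`c₁ t ^ e₁ + c₂ t ^ e₂ - c₃ - c₄ t ^ e₃`, and `F' t = t ^ (e₁ - 1) G t` with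
`G t = K₀ + K₁ t ^ f₁ - K₂ t ^ f₂`. Dividing by `t ^ f₂` shows that `G` changes sign once, from
`+` to `-`; hence `F` rises from `F 0 < 0` and falls to `-∞`, and as soon as `g` is positive
somewhere, `F` has the sign pattern `-, +, -`. So `g` decreases, increases and decreases again,
starting from `g 0 = 0` and tending to `-∞`: this gives the strict maximum, the strict local
minimum and the two zeros.

That `g` is positive somewhere comes from `α < α₂`: at the point `t` where
`E t ^ S = T B t ^ i₂`, `g t = t ^ s (A X ^ a + (1 - T) B X ^ b - C)` with `X = T B / E`, and the
bracket is larger than `(α₂ - α) C_q c ^ (2q(1 - δ_q)) / (2q)`.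
-/

open Set

lemma eventually_mul_rpow_add_mul_rpow_lt {d₁ d₂ c i₁ i₂ j : ℝ} (h₁ : i₁ < j) (h₂ : i₂ < j)
    (hc : 0 < c) : ∀ᶠ t in atTop, d₁ * t ^ i₁ + d₂ * t ^ i₂ < c * t ^ j := by
  have hlim : Tendsto (fun t : ℝ => d₁ * t ^ (i₁ - j) + d₂ * t ^ (i₂ - j)) atTop (𝓝 0) := by
    have := ((tendsto_rpow_neg_atTop (sub_pos.2 h₁)).const_mul d₁).add
      ((tendsto_rpow_neg_atTop (sub_pos.2 h₂)).const_mul d₂)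
    simpa only [neg_sub, mul_zero, add_zero] using this
  filter_upwards [hlim.eventually (gt_mem_nhds hc), eventually_gt_atTop 0] with t ht ht₀
  have hsplit : ∀ i, t ^ i = t ^ (i - j) * t ^ j := fun i => by rw [← rpow_add ht₀, sub_add_cancel]
  rw [hsplit i₁, hsplit i₂]
  nlinarith [rpow_pos_of_pos ht₀ j]

lemma hasDerivAt_const_mul_rpow_factored (c e s : ℝ) {t : ℝ} (ht : 0 < t) :
    HasDerivAt (fun t => c * t ^ e) (t ^ (s - 1) * (e * c * t ^ (e - s))) t := by
  refine ((hasDerivAt_rpow_const (Or.inl ht.ne')).const_mul c).congr_deriv ?_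
  have : t ^ (s - 1) * t ^ (e - s) = t ^ (e - 1) := by rw [← rpow_add ht]; ring_nf
  linear_combination (-(e * c)) * this

lemma strictMonoOn_of_hasDerivAt_rpow_mul {f k : ℝ → ℝ} {e : ℝ} {s : Set ℝ} (hs : Convex ℝ s)
    (hs₀ : s ⊆ Ici 0) (hf : Continuous f) (hf' : ∀ t > 0, HasDerivAt f (t ^ e * k t) t)
    (hk : ∀ t ∈ interior s, 0 < k t) : StrictMonoOn f s := by
  refine strictMonoOn_of_deriv_pos hs hf.continuousOn fun t ht => ?_
  have ht₀ : 0 < t := by simpa using interior_mono hs₀ ht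
  rw [(hf' t ht₀).deriv]
  exact mul_pos (rpow_pos_of_pos ht₀ e) (hk t ht)

lemma strictAntiOn_of_hasDerivAt_rpow_mul {f k : ℝ → ℝ} {e : ℝ} {s : Set ℝ} (hs : Convex ℝ s)
    (hs₀ : s ⊆ Ici 0) (hf : Continuous f) (hf' : ∀ t > 0, HasDerivAt f (t ^ e * k t) t)
    (hk : ∀ t ∈ interior s, k t < 0) : StrictAntiOn f s := by
  refine strictAntiOn_of_deriv_neg hs hf.continuousOn fun t ht => ?_
  have ht₀ : 0 < t := by simpa using interior_mono hs₀ ht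
  rw [(hf' t ht₀).deriv]
  exact mul_neg_of_pos_of_neg (rpow_pos_of_pos ht₀ e) (hk t ht)

lemma exists_sign_change_const_add_rpow_sub_rpow {G : ℝ → ℝ} {K₀ K₁ K₂ f₁ f₂ : ℝ}
    (hG : G = fun t => K₀ + K₁ * t ^ f₁ - K₂ * t ^ f₂) (hK₀ : 0 < K₀) (hK₁ : 0 < K₁)
    (hK₂ : 0 < K₂) (hf₁ : 0 < f₁) (hf₁₂ : f₁ < f₂) :
    ∃ r > 0, (∀ t ∈ Ioo 0 r, 0 < G t) ∧ ∀ t > r, G t < 0 := by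
  have hf₂ : 0 < f₂ := hf₁.trans hf₁₂
  set h : ℝ → ℝ := fun t => K₀ * t ^ (-f₂) + K₁ * t ^ (f₁ - f₂)
  have h_anti : StrictAntiOn h (Ioi 0) := fun x hx y _ hxy =>
    add_lt_add (mul_lt_mul_of_pos_left (rpow_lt_rpow_of_neg hx hxy (neg_lt_zero.2 hf₂)) hK₀)
      (mul_lt_mul_of_pos_left (rpow_lt_rpow_of_neg hx hxy (sub_neg.2 hf₁₂)) hK₁)
  have hG_eq : ∀ t > 0, G t = t ^ f₂ * (h t - K₂) := by
    intro t ht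
    have := (rpow_pos_of_pos ht f₂).ne'
    simp only [hG, h, rpow_neg ht.le, rpow_sub ht]
    field_simp
  obtain ⟨W, hW, hW₀⟩ := ((eventually_mul_rpow_add_mul_rpow_lt (d₁ := K₀) (d₂ := K₁) hf₂ hf₁₂
    hK₂).and (eventually_gt_atTop 0)).exists
  have hG_cont : Continuous G := by rw [hG]; fun_prop (disch := linarith)
  obtain ⟨r, ⟨hr₀, -⟩, hr⟩ : (0 : ℝ) ∈ G '' Ioo 0 W :=
    intermediate_value_Ioo' hW₀.le hG_cont.continuousOn
      ⟨by simp only [hG, rpow_zero, mul_one] at hW ⊢; linarith,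
        by simp [hG, zero_rpow hf₁.ne', zero_rpow hf₂.ne', hK₀]⟩
  have hhr : h r = K₂ := by
    rw [hG_eq r hr₀] at hr
    linarith [(mul_eq_zero.1 hr).resolve_left (rpow_pos_of_pos hr₀ f₂).ne']
  refine ⟨r, hr₀, fun t ⟨ht₀, htr⟩ => ?_, fun t htr => ?_⟩
  · rw [hG_eq t ht₀]
    exact mul_pos (rpow_pos_of_pos ht₀ _) (by linarith [h_anti ht₀ hr₀ htr])
  · have ht₀ := hr₀.trans htr
    rw [hG_eq t ht₀]
    exact mul_neg_of_pos_of_neg (rpow_pos_of_pos ht₀ _) (by linarith [h_anti hr₀ ht₀ htr])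

lemma exists_sign_changes_rpow_sub_const_sub_rpow {F : ℝ → ℝ} {c₁ c₂ c₃ c₄ e₁ e₂ e₃ : ℝ}
    (hF : F = fun t => c₁ * t ^ e₁ + c₂ * t ^ e₂ - c₃ - c₄ * t ^ e₃)
    (hc₁ : 0 < c₁) (hc₂ : 0 < c₂) (hc₃ : 0 < c₃) (hc₄ : 0 < c₄)
    (he₁ : 0 < e₁) (he₁₂ : e₁ < e₂) (he₂₃ : e₂ < e₃) (hpos : ∃ v > 0, 0 < F v) :
    ∃ u₁ u₂, 0 < u₁ ∧ u₁ < u₂ ∧ (∀ t ∈ Ioo 0 u₁, F t < 0) ∧ (∀ t ∈ Ioo u₁ u₂, 0 < F t) ∧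
      ∀ t > u₂, F t < 0 := by
  have hF_cont : Continuous F := by rw [hF]; fun_prop (disch := linarith)
  have hF' : ∀ t > 0, HasDerivAt F
      (t ^ (e₁ - 1) * (e₁ * c₁ + e₂ * c₂ * t ^ (e₂ - e₁) - e₃ * c₄ * t ^ (e₃ - e₁))) t := by
    intro t ht
    rw [hF]
    refine ((((hasDerivAt_const_mul_rpow_factored c₁ e₁ e₁ ht).add
      (hasDerivAt_const_mul_rpow_factored c₂ e₂ e₁ ht)).sub_const c₃).sub
      (hasDerivAt_const_mul_rpow_factored c₄ e₃ e₁ ht)).congr_deriv ?_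
    rw [sub_self, rpow_zero]
    ring
  obtain ⟨r, hr₀, hG_pos, hG_neg⟩ := exists_sign_change_const_add_rpow_sub_rpow
    (K₀ := e₁ * c₁) (K₁ := e₂ * c₂) (K₂ := e₃ * c₄) rfl (mul_pos he₁ hc₁)
    (mul_pos (he₁.trans he₁₂) hc₂) (mul_pos (he₁.trans (he₁₂.trans he₂₃)) hc₄)
    (sub_pos.2 he₁₂) (sub_lt_sub_right he₂₃ e₁)
  have h_mono : StrictMonoOn F (Icc 0 r) :=
    strictMonoOn_of_hasDerivAt_rpow_mul (convex_Icc 0 r) Icc_subset_Ici_self hF_cont hF'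
      (by rw [interior_Icc]; exact hG_pos)
  have h_anti : StrictAntiOn F (Ici r) :=
    strictAntiOn_of_hasDerivAt_rpow_mul (convex_Ici r) (Ici_subset_Ici.2 hr₀.le) hF_cont hF'
      (by rw [interior_Ici]; exact hG_neg)
  have hF₀ : F 0 < 0 := by simp [hF, zero_rpow he₁.ne', zero_rpow (he₁.trans he₁₂).ne',
    zero_rpow (he₁.trans (he₁₂.trans he₂₃)).ne', hc₃]
  have hFr : 0 < F r := by
    obtain ⟨v, hv₀, hv⟩ := hpos
    rcases le_total v r with hvr | hrv
    · exact hv.trans_le (h_mono.monotoneOn ⟨hv₀.le, hvr⟩ ⟨hr₀.le, le_rfl⟩ hvr)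
    · exact hv.trans_le (h_anti.antitoneOn self_mem_Ici hrv hrv)
  obtain ⟨u₁, ⟨hu₁, hu₁r⟩, hFu₁⟩ : (0 : ℝ) ∈ F '' Ioo 0 r :=
    intermediate_value_Ioo hr₀.le hF_cont.continuousOn ⟨hF₀, hFr⟩
  have hF_neg : ∀ᶠ t in atTop, F t < 0 := by
    filter_upwards [eventually_mul_rpow_add_mul_rpow_lt (d₁ := c₁) (d₂ := c₂)
      (he₁₂.trans he₂₃) he₂₃ hc₄] with t ht
    simp only [hF]
    linarith
  obtain ⟨W, hW, hrW⟩ := (hF_neg.and (eventually_gt_atTop r)).exists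
  obtain ⟨u₂, ⟨hru₂, -⟩, hFu₂⟩ : (0 : ℝ) ∈ F '' Ioo r W :=
    intermediate_value_Ioo' hrW.le hF_cont.continuousOn ⟨hW, hFr⟩
  refine ⟨u₁, u₂, hu₁, hu₁r.trans hru₂, fun t ⟨ht₀, htu₁⟩ => ?_, fun t ⟨htu₁, htu₂⟩ => ?_,
    fun t htu₂ => ?_⟩
  · rw [← hFu₁]
    exact h_mono ⟨ht₀.le, (htu₁.trans hu₁r).le⟩ ⟨hu₁.le, hu₁r.le⟩ htu₁
  · rcases le_total t r with htr | hrt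
    · rw [← hFu₁]
      exact h_mono ⟨hu₁.le, hu₁r.le⟩ ⟨(hu₁.trans htu₁).le, htr⟩ htu₁
    · rw [← hFu₂]
      exact h_anti hrt hru₂.le htu₂
  · rw [← hFu₂]
    exact h_anti hru₂.le (hru₂.le.trans htu₂.le) htu₂

lemma exists_strictAntiOn_strictMonoOn_strictAntiOn {g : ℝ → ℝ} {A B C E s i₁ i₂ S : ℝ}
    (hg : g = fun t => A * t ^ i₁ + B * t ^ i₂ - C * t ^ s - E * t ^ S)
    (hA : 0 < A) (hB : 0 < B) (hC : 0 < C) (hE : 0 < E)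
    (hs : 0 < s) (hsi₁ : s < i₁) (hi₁₂ : i₁ < i₂) (hi₂S : i₂ < S) (hpos : ∃ v > 0, 0 < g v) :
    ∃ u₁ u₂, 0 < u₁ ∧ u₁ < u₂ ∧ StrictAntiOn g (Icc 0 u₁) ∧ StrictMonoOn g (Icc u₁ u₂) ∧
      StrictAntiOn g (Ici u₂) := by
  set F : ℝ → ℝ := fun t =>
    i₁ * A * t ^ (i₁ - s) + i₂ * B * t ^ (i₂ - s) - s * C - S * E * t ^ (S - s) with hF
  have hg_cont : Continuous g := by rw [hg]; fun_prop (disch := linarith)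
  have hg' : ∀ t > 0, HasDerivAt g (t ^ (s - 1) * F t) t := by
    intro t ht
    rw [hg]
    refine ((((hasDerivAt_const_mul_rpow_factored A i₁ s ht).add
      (hasDerivAt_const_mul_rpow_factored B i₂ s ht)).sub
      (hasDerivAt_const_mul_rpow_factored C s s ht)).sub
      (hasDerivAt_const_mul_rpow_factored E S s ht)).congr_deriv ?_
    rw [sub_self, rpow_zero]
    ring
  have hF_pos : ∃ v > 0, 0 < F v := by
    by_contra! hF_nonpos
    have h_anti : AntitoneOn g (Ici 0) := by
      refine antitoneOn_of_deriv_nonpos (convex_Ici 0) hg_cont.continuousOn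
        (fun t ht => (hg' t (by simpa using ht)).differentiableAt.differentiableWithinAt)
        fun t ht => ?_
      rw [interior_Ici] at ht
      rw [(hg' t ht).deriv]
      exact mul_nonpos_of_nonneg_of_nonpos (rpow_pos_of_pos ht _).le (hF_nonpos t ht)
    obtain ⟨v, hv₀, hv⟩ := hpos
    have hg₀ : g 0 = 0 := by
      simp [hg, zero_rpow hs.ne', zero_rpow (hs.trans hsi₁).ne',
        zero_rpow (hs.trans (hsi₁.trans hi₁₂)).ne',
        zero_rpow (hs.trans (hsi₁.trans (hi₁₂.trans hi₂S))).ne']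
    linarith [h_anti self_mem_Ici hv₀.le hv₀.le]
  obtain ⟨u₁, u₂, hu₁, hu₁₂, hF_neg₁, hF_pos₂, hF_neg₃⟩ :=
    exists_sign_changes_rpow_sub_const_sub_rpow hF (mul_pos (hs.trans hsi₁) hA)
      (mul_pos (hs.trans (hsi₁.trans hi₁₂)) hB) (mul_pos hs hC)
      (mul_pos (hs.trans (hsi₁.trans (hi₁₂.trans hi₂S))) hE)
      (sub_pos.2 hsi₁) (sub_lt_sub_right hi₁₂ s) (sub_lt_sub_right hi₂S s) hF_pos
  refine ⟨u₁, u₂, hu₁, hu₁₂, ?_, ?_, ?_⟩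
  · exact strictAntiOn_of_hasDerivAt_rpow_mul (convex_Icc 0 u₁) Icc_subset_Ici_self hg_cont hg'
      (by rw [interior_Icc]; exact hF_neg₁)
  · exact strictMonoOn_of_hasDerivAt_rpow_mul (convex_Icc u₁ u₂)
      (fun t ht => le_trans hu₁.le ht.1) hg_cont hg' (by rw [interior_Icc]; exact hF_pos₂)
  · exact strictAntiOn_of_hasDerivAt_rpow_mul (convex_Ici u₂)
      (Ici_subset_Ici.2 (hu₁.trans hu₁₂).le) hg_cont hg' (by rw [interior_Ici]; exact hF_neg₃)

section AntiMonoAnti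

variable {f : ℝ → ℝ} {u₁ u₂ : ℝ}

lemma pos_and_strictMax_of_anti_mono_anti (hf₀ : f 0 ≤ 0) (hu₁ : 0 < u₁) (hu₁₂ : u₁ < u₂)
    (h₁ : StrictAntiOn f (Icc 0 u₁)) (h₂ : StrictMonoOn f (Icc u₁ u₂))
    (h₃ : StrictAntiOn f (Ici u₂)) (hpos : ∃ v ≥ 0, 0 < f v) :
    0 < f u₂ ∧ ∀ t ∈ Ici 0, t ≠ u₂ → f t < f u₂ := by
  have key : ∀ t ≥ 0, t ≠ u₂ → f t ≤ 0 ∨ f t < f u₂ := by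
    intro t ht htu₂
    rcases le_or_gt t u₁ with htu₁ | htu₁
    · exact Or.inl ((h₁.antitoneOn ⟨le_rfl, hu₁.le⟩ ⟨ht, htu₁⟩ ht).trans hf₀)
    rcases htu₂.lt_or_gt with htu₂ | htu₂
    · exact Or.inr (h₂ ⟨htu₁.le, htu₂.le⟩ ⟨hu₁₂.le, le_rfl⟩ htu₂)
    · exact Or.inr (h₃ self_mem_Ici htu₂.le htu₂)
  have hmax : 0 < f u₂ := by
    obtain ⟨v, hv₀, hv⟩ := hpos
    rcases eq_or_ne v u₂ with rfl | hvu₂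
    · exact hv
    · rcases key v hv₀ hvu₂ with h | h <;> linarith
  exact ⟨hmax, fun t ht htu₂ => (key t ht htu₂).elim (fun h => h.trans_lt hmax) id⟩

lemma neg_and_strictLocalMin_of_anti_mono (hf₀ : f 0 ≤ 0) (hu₁ : 0 < u₁) (hu₁₂ : u₁ < u₂)
    (h₁ : StrictAntiOn f (Icc 0 u₁)) (h₂ : StrictMonoOn f (Icc u₁ u₂)) :
    f u₁ < 0 ∧ ∃ ε > 0, ∀ t ∈ Ici 0, t ≠ u₁ → |t - u₁| < ε → f u₁ < f t := by
  refine ⟨(h₁ ⟨le_rfl, hu₁.le⟩ ⟨hu₁.le, le_rfl⟩ hu₁).trans_le hf₀, u₂ - u₁, sub_pos.2 hu₁₂,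
    fun t ht htu₁ hε => ?_⟩
  rcases htu₁.lt_or_gt with htu₁ | htu₁
  · exact h₁ ⟨ht, htu₁.le⟩ ⟨hu₁.le, le_rfl⟩ htu₁
  · exact h₂ ⟨le_rfl, hu₁₂.le⟩ ⟨htu₁.le, by linarith [le_abs_self (t - u₁)]⟩ htu₁

lemma exists_zeros_of_anti_mono_anti (hf : Continuous f) (hf₀ : f 0 ≤ 0) (hu₁ : 0 < u₁)
    (hu₁₂ : u₁ < u₂) (h₁ : StrictAntiOn f (Icc 0 u₁)) (h₂ : StrictMonoOn f (Icc u₁ u₂))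
    (h₃ : StrictAntiOn f (Ici u₂)) (hfu₁ : f u₁ < 0) (hfu₂ : 0 < f u₂)
    (hneg : ∀ᶠ t in atTop, f t < 0) :
    ∃ t₀ t₁ : ℝ, 0 < t₀ ∧ t₀ < t₁ ∧ f t₀ = 0 ∧ f t₁ = 0 ∧
      ∀ t ∈ Ici 0, (0 < f t ↔ t₀ < t ∧ t < t₁) := by
  obtain ⟨t₀, ⟨hu₁t₀, ht₀u₂⟩, hft₀⟩ : (0 : ℝ) ∈ f '' Ioo u₁ u₂ :=
    intermediate_value_Ioo hu₁₂.le hf.continuousOn ⟨hfu₁, hfu₂⟩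
  obtain ⟨W, hW, hu₂W⟩ := (hneg.and (eventually_gt_atTop u₂)).exists
  obtain ⟨t₁, ⟨hu₂t₁, -⟩, hft₁⟩ : (0 : ℝ) ∈ f '' Ioo u₂ W :=
    intermediate_value_Ioo' hu₂W.le hf.continuousOn ⟨hW, hfu₂⟩
  refine ⟨t₀, t₁, hu₁.trans hu₁t₀, ht₀u₂.trans hu₂t₁, hft₀, hft₁, fun t ht => ?_⟩
  rcases le_or_gt t u₁ with htu₁ | htu₁
  · have hft : f t ≤ 0 := (h₁.antitoneOn ⟨le_rfl, hu₁.le⟩ ⟨ht, htu₁⟩ ht).trans hf₀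
    exact iff_of_false hft.not_gt fun h => by linarith [h.1]
  rcases le_or_gt t u₂ with htu₂ | htu₂
  · rw [← hft₀, h₂.lt_iff_lt ⟨hu₁t₀.le, ht₀u₂.le⟩ ⟨htu₁.le, htu₂⟩]
    exact (and_iff_left (htu₂.trans_lt hu₂t₁)).symm
  · rw [← hft₁, h₃.lt_iff_gt hu₂t₁.le htu₂.le]
    exact (and_iff_right (ht₀u₂.trans htu₂)).symm

end AntiMonoAnti

theorem strictMax_localMin_zeros_of_exists_pos {g : ℝ → ℝ} {A B C E s i₁ i₂ S : ℝ}
    (hg : g = fun t => A * t ^ i₁ + B * t ^ i₂ - C * t ^ s - E * t ^ S)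
    (hA : 0 < A) (hB : 0 < B) (hC : 0 < C) (hE : 0 < E)
    (hs : 0 < s) (hsi₁ : s < i₁) (hi₁₂ : i₁ < i₂) (hi₂S : i₂ < S) (hpos : ∃ v > 0, 0 < g v) :
    (∃ tM ∈ Ici (0 : ℝ), 0 < g tM ∧ ∀ t ∈ Ici (0 : ℝ), t ≠ tM → g t < g tM) ∧
    (∃ tm ∈ Ici (0 : ℝ), g tm < 0 ∧
      ∃ ε > (0 : ℝ), ∀ t ∈ Ici (0 : ℝ), t ≠ tm → |t - tm| < ε → g tm < g t) ∧
    (∃ t₀ t₁ : ℝ, 0 < t₀ ∧ t₀ < t₁ ∧ g t₀ = 0 ∧ g t₁ = 0 ∧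
      ∀ t ∈ Ici (0 : ℝ), (0 < g t ↔ t₀ < t ∧ t < t₁)) := by
  obtain ⟨u₁, u₂, hu₁, hu₁₂, h₁, h₂, h₃⟩ :=
    exists_strictAntiOn_strictMonoOn_strictAntiOn hg hA hB hC hE hs hsi₁ hi₁₂ hi₂S hpos
  have hg_cont : Continuous g := by rw [hg]; fun_prop (disch := linarith)
  have hg₀ : g 0 ≤ 0 := by
    simp [hg, zero_rpow hs.ne', zero_rpow (hs.trans hsi₁).ne',
      zero_rpow (hs.trans (hsi₁.trans hi₁₂)).ne',
      zero_rpow (hs.trans (hsi₁.trans (hi₁₂.trans hi₂S))).ne']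
  have hg_neg : ∀ᶠ t in atTop, g t < 0 := by
    filter_upwards [eventually_mul_rpow_add_mul_rpow_lt (d₁ := A) (d₂ := B) (hi₁₂.trans hi₂S) hi₂S
      hE, eventually_gt_atTop 0] with t ht ht₀
    simp only [hg]
    nlinarith [rpow_pos_of_pos ht₀ s]
  obtain ⟨hgu₂, hmax⟩ := pos_and_strictMax_of_anti_mono_anti hg₀ hu₁ hu₁₂ h₁ h₂ h₃
    (let ⟨v, hv₀, hv⟩ := hpos; ⟨v, hv₀.le, hv⟩)
  obtain ⟨hgu₁, hmin⟩ := neg_and_strictLocalMin_of_anti_mono hg₀ hu₁ hu₁₂ h₁ h₂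
  exact ⟨⟨u₂, (hu₁.trans hu₁₂).le, hgu₂, hmax⟩, ⟨u₁, hu₁.le, hgu₁, hmin⟩,
    exists_zeros_of_anti_mono_anti hg_cont hg₀ hu₁ hu₁₂ h₁ h₂ h₃ hgu₁ hgu₂ hg_neg⟩

/-- The right-hand side of `hC` is `α₂` in the normalisation of `alpha2_mul_eq`. -/
lemma exists_pos_of_lt_test_value {A B C E s i₁ i₂ S T : ℝ} (hA : 0 ≤ A) (hB : 0 < B)
    (hE : 0 < E) (hT₀ : 0 < T) (hT₁ : T < 1) (hi₁₂ : i₁ ≤ i₂) (hi₂S : i₂ < S)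
    (hC : C < (1 - T) * T ^ ((i₂ - s) / (S - i₂)) *
      (A * (B / E) ^ ((i₁ - s) / (S - i₂)) + B * (B / E) ^ ((i₂ - s) / (S - i₂)))) :
    ∃ t > 0, 0 < A * t ^ i₁ + B * t ^ i₂ - C * t ^ s - E * t ^ S := by
  have hd : 0 < S - i₂ := sub_pos.2 hi₂S
  -- the test point `t`, where `E * t ^ S = T * B * t ^ i₂`
  set X := T * B / E with hX
  have hX₀ : 0 < X := by positivity
  set t := X ^ (S - i₂)⁻¹
  have ht₀ : 0 < t := rpow_pos_of_pos hX₀ _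
  have ht : ∀ e, t ^ e = X ^ (s / (S - i₂)) * X ^ ((e - s) / (S - i₂)) := fun e => by
    rw [← rpow_mul hX₀.le, ← rpow_add hX₀]
    congr 1
    field_simp
    ring
  have hXS : E * X ^ ((S - s) / (S - i₂)) = T * B * X ^ ((i₂ - s) / (S - i₂)) := by
    rw [show (S - s) / (S - i₂) = (i₂ - s) / (S - i₂) + 1 by field_simp; ring,
      rpow_add_one hX₀.ne', hX]
    field_simp
  have hXZ : ∀ e : ℝ, X ^ e = T ^ e * (B / E) ^ e := fun e => by
    rw [hX, mul_div_assoc, mul_rpow hT₀.le (by positivity)]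
  have hT : T ^ ((i₂ - s) / (S - i₂)) ≤ T ^ ((i₁ - s) / (S - i₂)) :=
    rpow_le_rpow_of_exponent_ge hT₀ hT₁.le (div_le_div_of_nonneg_right (by linarith) hd.le)
  have hval : C < A * X ^ ((i₁ - s) / (S - i₂)) + (1 - T) * B * X ^ ((i₂ - s) / (S - i₂)) := by
    refine hC.trans_le ?_
    rw [hXZ, hXZ]
    have : 0 ≤ A * (B / E) ^ ((i₁ - s) / (S - i₂)) *
        (T ^ ((i₁ - s) / (S - i₂)) - (1 - T) * T ^ ((i₂ - s) / (S - i₂))) :=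
      mul_nonneg (by positivity) (by nlinarith [rpow_pos_of_pos hT₀ ((i₂ - s) / (S - i₂))])
    linear_combination this
  refine ⟨t, ht₀, ?_⟩
  simp only [ht, sub_self, zero_div, rpow_zero, mul_one]
  linear_combination mul_pos (rpow_pos_of_pos hX₀ (s / (S - i₂))) (sub_pos.2 hval) +
    X ^ (s / (S - i₂)) * hXS

lemma mul_deltaExp (N : ℕ) (μ : ℝ) {r : ℝ} (hr : r ≠ 0) :
    r * deltaExp N μ r = ((N : ℝ) * (r - 2) + μ) / 2 := by
  unfold deltaExp
  field_simp

lemma mul_deltaExp_mem_Ioo {N : ℕ} {μ q : ℝ} (hN : 0 < (N : ℝ)) (hμN : μ < N)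
    (hq₁ : (2 * (N : ℝ) - μ) / N < q) (hq₂ : q < 2 + (2 - μ) / N) :
    0 < q ∧ q * deltaExp N μ q ∈ Ioo 0 1 := by
  rw [div_lt_iff₀ hN] at hq₁
  have hq₂' := (lt_div_iff₀ hN).1 (sub_lt_iff_lt_add'.2 hq₂)
  have hq : 0 < q := by nlinarith
  rw [mul_deltaExp N μ hq.ne']
  exact ⟨hq, by constructor <;> linarith⟩

lemma lt_mul_deltaExp {N : ℕ} {μ θ p : ℝ} (hN : 0 < (N : ℝ)) (hμN : μ < N) (hθ : 1 < θ)
    (hp : 2 + (2 * θ - μ) / N < p) : 0 < p ∧ θ < p * deltaExp N μ p := by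
  have hp' := (div_lt_iff₀ hN).1 (lt_sub_iff_add_lt'.2 hp)
  have hp₀ : 0 < p := by nlinarith
  rw [mul_deltaExp N μ hp₀.ne']
  exact ⟨hp₀, by linarith⟩

/-- The number `T` of the paper, with `κ = T ^ ((θ - Q) / (P - θ)) - T ^ ((P - Q) / (P - θ))`. -/
def kappaBase (θ Q P : ℝ) : ℝ := θ * (θ - Q) * (θ - 1) / (P * (P - Q) * (P - 1))

lemma kappaConst_eq (N : ℕ) (μ θ q p : ℝ) :
    kappaConst N μ θ q p =
      kappaBase θ (q * deltaExp N μ q) (p * deltaExp N μ p) ^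
          ((θ - q * deltaExp N μ q) / (p * deltaExp N μ p - θ)) -
        kappaBase θ (q * deltaExp N μ q) (p * deltaExp N μ p) ^
          ((p * deltaExp N μ p - q * deltaExp N μ q) / (p * deltaExp N μ p - θ)) := rfl

lemma kappaBase_mem_Ioo {θ Q P : ℝ} (hθ : 1 < θ) (hQθ : Q < θ) (hθP : θ < P) :
    kappaBase θ Q P ∈ Ioo 0 1 := by
  have : 0 < θ - 1 := sub_pos.2 hθ
  have : 0 < θ - Q := sub_pos.2 hQθ
  have hpos : 0 < θ * (θ - Q) * (θ - 1) := by positivity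
  have hlt : θ * (θ - Q) * (θ - 1) < P * (P - Q) * (P - 1) := by gcongr
  exact ⟨div_pos hpos (hpos.trans hlt), (div_lt_one (hpos.trans hlt)).2 hlt⟩

lemma Cconst_nonneg (N : ℕ) (μ r : ℝ) : 0 ≤ Cconst N μ r := by
  unfold Cconst
  split_ifs
  · refine rpow_nonneg (Real.sInf_nonneg ?_) _
    rintro t ⟨u, -, -, -, rfl⟩
    exact div_nonneg (integral_nonneg fun x => by positivity)
      (rpow_nonneg (integral_nonneg fun x => integral_nonneg fun y => by positivity) _)
  · exact Real.sInf_nonneg fun C hC => hC.1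

/-- `Cconst` is an infimum and may be the junk value `0`; but then `alpha2 = 0`, through division
by zero and `0 ^ x = 0`. -/
lemma Cconst_pos_of_alpha2_pos {N : ℕ} {μ θ a b c q p : ℝ}
    (h₁ : (1 - q * deltaExp N μ q) / (p * deltaExp N μ p - θ) ≠ 0)
    (h₂ : (θ - q * deltaExp N μ q) / (p * deltaExp N μ p - θ) ≠ 0)
    (hα₂ : 0 < alpha2 N μ θ a b c q p) : 0 < Cconst N μ q ∧ 0 < Cconst N μ p := by
  refine ⟨(Cconst_nonneg N μ q).lt_of_ne fun h => ?_, (Cconst_nonneg N μ p).lt_of_ne fun h => ?_⟩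
  all_goals
    rw [alpha2, ← h] at hα₂
    simp [zero_rpow h₁, zero_rpow h₂] at hα₂

lemma alpha2_mul_eq {N : ℕ} {μ θ a b c q p : ℝ} (hθ : 1 < θ) (hb : 0 < b) (hc : 0 < c)
    (hq : 0 < q) (hp : 0 < p) (hCq : 0 < Cconst N μ q) (hCp : 0 < Cconst N μ p)
    (hQθ : q * deltaExp N μ q < θ) (hθP : θ < p * deltaExp N μ p) :
    alpha2 N μ θ a b c q p * (Cconst N μ q * c ^ (2 * q * (1 - deltaExp N μ q)) / (2 * q)) =
      (1 - kappaBase θ (q * deltaExp N μ q) (p * deltaExp N μ p)) *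
        kappaBase θ (q * deltaExp N μ q) (p * deltaExp N μ p) ^
          ((2 * θ - 2 * q * deltaExp N μ q) / (2 * p * deltaExp N μ p - 2 * θ)) *
        (a / 2 * (b / (2 * θ) / (1 / (2 * p) * Cconst N μ p * c ^ (2 * p * (1 - deltaExp N μ p)))) ^
            ((2 - 2 * q * deltaExp N μ q) / (2 * p * deltaExp N μ p - 2 * θ)) +
          b / (2 * θ) *
            (b / (2 * θ) / (1 / (2 * p) * Cconst N μ p * c ^ (2 * p * (1 - deltaExp N μ p)))) ^
              ((2 * θ - 2 * q * deltaExp N μ q) / (2 * p * deltaExp N μ p - 2 * θ))) := by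
  rw [alpha2, kappaConst_eq]
  have hT := (kappaBase_mem_Ioo hθ hQθ hθP).1
  generalize kappaBase θ (q * deltaExp N μ q) (p * deltaExp N μ p) = T at hT ⊢
  generalize Cconst N μ q = Cq at hCq ⊢
  generalize Cconst N μ p = Cp at hCp ⊢
  generalize deltaExp N μ q = δq at hQθ ⊢
  generalize deltaExp N μ p = δp at hθP ⊢
  have hd : p * δp - θ ≠ 0 := (sub_pos.2 hθP).ne'
  have hx₁ : (2 - 2 * q * δq) / (2 * p * δp - 2 * θ) = (1 - q * δq) / (p * δp - θ) := by
    field_simp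
  have hx₂ : (2 * θ - 2 * q * δq) / (2 * p * δp - 2 * θ) = (θ - q * δq) / (p * δp - θ) := by
    field_simp
  have hy : (p * δp - q * δq) / (p * δp - θ) = (θ - q * δq) / (p * δp - θ) + 1 := by
    field_simp; ring
  have hc_split : ∀ x, c ^ (2 * q * (1 - δq) + 2 * p * (1 - δp) * x / (p * δp - θ)) =
      c ^ (2 * q * (1 - δq)) * (c ^ (2 * p * (1 - δp))) ^ (x / (p * δp - θ)) := fun x => by
    rw [rpow_add hc, mul_div_assoc, rpow_mul hc.le (2 * p * (1 - δp))]
  rw [hx₁, hx₂, hy, hc_split, hc_split]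
  set x₁ := (1 - q * δq) / (p * δp - θ)
  set x₂ := (θ - q * δq) / (p * δp - θ)
  set c₀ := c ^ (2 * q * (1 - δq))
  set D := c ^ (2 * p * (1 - δp))
  have hD : 0 < D := rpow_pos_of_pos hc _
  have hc₀ : 0 < c₀ := rpow_pos_of_pos hc _
  set Y := b * p / (θ * Cp) with hY_def
  have hY : 0 < Y := by positivity
  have hZ : b / (2 * θ) / (1 / (2 * p) * Cp * D) = Y / D := by rw [hY_def]; field_simp
  have hbC : (b / (2 * θ)) ^ (x₂ + 1) / (Cp / (2 * p)) ^ x₂ = b / (2 * θ) * Y ^ x₂ := by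
    rw [rpow_add_one (by positivity), mul_comm, mul_div_assoc,
      ← div_rpow (by positivity) (by positivity), hY_def]
    congr 2
    field_simp
  rw [hZ, div_rpow hY.le hD.le, div_rpow hY.le hD.le, hbC, rpow_add_one hT.ne']
  have := rpow_pos_of_pos hD x₁
  have := rpow_pos_of_pos hD x₂
  field_simp

theorem statement12_general
    (N : ℕ) (μ a b c θ q p α : ℝ)
    (hN : 3 ≤ N) (hμN : μ < (N : ℝ))
    (ha : 0 < a) (hb : 0 < b) (hc : 0 < c)
    (hθ1 : 1 < θ)
    (hq1 : (2 * (N : ℝ) - μ) / (N : ℝ) < q) (hq2 : q < 2 + (2 - μ) / (N : ℝ))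
    (hp1 : 2 + (2 * θ - μ) / (N : ℝ) < p)
    (hα0 : 0 < α) (hα : α < alpha2 N μ θ a b c q p) :
    (∃ tM ∈ Set.Ici (0 : ℝ), 0 < gComp N a b θ μ α q p c tM ∧
      ∀ t ∈ Set.Ici (0 : ℝ), t ≠ tM →
        gComp N a b θ μ α q p c t < gComp N a b θ μ α q p c tM) ∧
    (∃ tm ∈ Set.Ici (0 : ℝ), gComp N a b θ μ α q p c tm < 0 ∧
      ∃ ε > (0 : ℝ), ∀ t ∈ Set.Ici (0 : ℝ), t ≠ tm → |t - tm| < ε →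
        gComp N a b θ μ α q p c tm < gComp N a b θ μ α q p c t) ∧
    (∃ t₀ t₁ : ℝ, 0 < t₀ ∧ t₀ < t₁ ∧
      gComp N a b θ μ α q p c t₀ = 0 ∧ gComp N a b θ μ α q p c t₁ = 0 ∧
      ∀ t ∈ Set.Ici (0 : ℝ), (0 < gComp N a b θ μ α q p c t ↔ t₀ < t ∧ t < t₁)) := by
  have hN₀ : (0 : ℝ) < N := by exact_mod_cast (by omega : 0 < N)
  obtain ⟨hq, hQ₀, hQ₁⟩ := mul_deltaExp_mem_Ioo hN₀ hμN hq1 hq2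
  obtain ⟨hp, hθP⟩ := lt_mul_deltaExp hN₀ hμN hθ1 hp1
  have hQθ : q * deltaExp N μ q < θ := hQ₁.trans hθ1
  obtain ⟨hCq, hCp⟩ := Cconst_pos_of_alpha2_pos (div_pos (sub_pos.2 hQ₁) (sub_pos.2 hθP)).ne'
    (div_pos (sub_pos.2 hQθ) (sub_pos.2 hθP)).ne' (hα0.trans hα)
  obtain ⟨hT₀, hT₁⟩ := kappaBase_mem_Ioo hθ1 hQθ hθP
  have hpos : ∃ t > 0, 0 < gComp N a b θ μ α q p c t := by
    refine exists_pos_of_lt_test_value (by positivity) (by positivity) (by positivity) hT₀ hT₁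
      (by linarith) (by linarith) ?_
    rw [← alpha2_mul_eq hθ1 hb hc hq hp hCq hCp hQθ hθP]
    calc α / (2 * q) * Cconst N μ q * c ^ (2 * q * (1 - deltaExp N μ q))
        = α * (Cconst N μ q * c ^ (2 * q * (1 - deltaExp N μ q)) / (2 * q)) := by ring
      _ < _ := mul_lt_mul_of_pos_right hα (by positivity)
  exact strictMax_localMin_zeros_of_exists_pos rfl (by positivity) (by positivity) (by positivity)
    (by positivity) (by linarith) (by linarith) (by linarith) (by linarith) hpos

/-- **Lemma 4.3** (Statement 12): for `2_{μ,*} < q < A*`, `B* < p ≤ 2*_μ` and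
`0 < α < α₂`, the comparison function `g` has a global strict maximum at a
positive level and a local strict minimum at a negative level on `[0,∞)`;
moreover there are `0 < t₀ < t₁` with `g(t₀) = g(t₁) = 0` and `g > 0` exactly
on `(t₀, t₁)`. -/
theorem statement12
    (N : ℕ) (μ a b c θ q p α : ℝ)
    (hN : 3 ≤ N) (hμ0 : 0 < μ) (hμN : μ < (N : ℝ))
    (ha : 0 < a) (hb : 0 < b) (hc : 0 < c)
    (hθ1 : 1 < θ) (hθ2 : θ < tmu N μ)
    (hq1 : (2 * (N : ℝ) - μ) / (N : ℝ) < q) (hq2 : q < 2 + (2 - μ) / (N : ℝ))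
    (hp1 : 2 + (2 * θ - μ) / (N : ℝ) < p) (hp2 : p ≤ tmu N μ)
    (hα0 : 0 < α) (hα : α < alpha2 N μ θ a b c q p) :
    (∃ tM ∈ Set.Ici (0 : ℝ), 0 < gComp N a b θ μ α q p c tM ∧
      ∀ t ∈ Set.Ici (0 : ℝ), t ≠ tM →
        gComp N a b θ μ α q p c t < gComp N a b θ μ α q p c tM) ∧
    (∃ tm ∈ Set.Ici (0 : ℝ), gComp N a b θ μ α q p c tm < 0 ∧
      ∃ ε > (0 : ℝ), ∀ t ∈ Set.Ici (0 : ℝ), t ≠ tm → |t - tm| < ε →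
        gComp N a b θ μ α q p c tm < gComp N a b θ μ α q p c t) ∧
    (∃ t₀ t₁ : ℝ, 0 < t₀ ∧ t₀ < t₁ ∧
      gComp N a b θ μ α q p c t₀ = 0 ∧ gComp N a b θ μ α q p c t₁ = 0 ∧
      ∀ t ∈ Set.Ici (0 : ℝ), (0 < gComp N a b θ μ α q p c t ↔ t₀ < t ∧ t < t₁)) :=
  statement12_general N μ a b c θ q p α hN hμN ha hb hc hθ1 hq1 hq2 hp1 hα0 hα
end
end
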